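/- In the variant Earley algorithm, a suffix item [β] is inserted in U_j if and only if there exist i, A, α, γ such that S ⇒* a_1⋯a_i A γ, (A → αβ) ∈ P, and α ⇒* a_{i+1}⋯a_j. -/

import Mathlib

/-! Formalization of Earley parsing and the Nederhof–Satta variant. -/

variable {T N : Type}

/-- A context-free grammar: a start nonterminal and a set of productions. -/
structure CFG (T N : Type) where
  initial : N
  rules : Set (N × List (Symbol T N))

/-- One rewriting step of the grammar. -/
def CFG.Produces (g : CFG T N) (u v : List (Symbol T N)) : Prop :=
  ∃ A α p q, (A, α) ∈ g.rules ∧ u = p ++ [Symbol.nonterminal A] ++ q ∧ v = p ++ α ++ q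

/-- The derivation relation ⇒* (reflexive-transitive closure of rewriting). -/
def CFG.Derives (g : CFG T N) : List (Symbol T N) → List (Symbol T N) → Prop :=
  Relation.ReflTransGen g.Produces

/-- The language of the grammar: { w | S ⇒* w }. -/
def CFG.language (g : CFG T N) : Set (List T) :=
  { w | g.Derives [Symbol.nonterminal g.initial] (w.map Symbol.terminal) }

/-- `inputSlice w i j` is the substring a_{i+1}⋯a_j of `w` (0-based: w[i..j)), as symbols. -/
def inputSlice (w : List T) (i j : ℕ) : List (Symbol T N) :=
  ((w.take j).drop i).map Symbol.terminal

/-- The least Earley table: `Earley g w A α β i j` means the dotted item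
[A → α • β] is inserted in E_{i,j}. -/
inductive Earley (g : CFG T N) (w : List T) :
    N → List (Symbol T N) → List (Symbol T N) → ℕ → ℕ → Prop where
  | init {α} : (g.initial, α) ∈ g.rules → Earley g w g.initial [] α 0 0
  | predict {B α A β i j γ} : Earley g w B α (Symbol.nonterminal A :: β) i j →
      (A, γ) ∈ g.rules → Earley g w A [] γ j j
  | scan {A α a β i j} : Earley g w A α (Symbol.terminal a :: β) i j →
      w[j]? = some a → Earley g w A (α ++ [Symbol.terminal a]) β i (j + 1)
  | complete {A α B β i k γ j} : Earley g w A α (Symbol.nonterminal B :: β) i k →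
      Earley g w B γ [] k j → (B, γ) ∈ g.rules →
      Earley g w A (α ++ [Symbol.nonterminal B]) β i j

mutual
  /-- Forward part of the variant: `VarU g w β j` means suffix item [β] ∈ U_j. -/
  inductive VarU (g : CFG T N) (w : List T) : List (Symbol T N) → ℕ → Prop where
    | init {α} : (g.initial, α) ∈ g.rules → VarU g w α 0
    | predict {A β j γ} : VarU g w (Symbol.nonterminal A :: β) j →
        (A, γ) ∈ g.rules → VarU g w γ j
    | scan {a β j} : VarU g w (Symbol.terminal a :: β) j → w[j]? = some a →
        VarU g w β (j + 1)
    | complete {B β k γ j} : VarU g w (Symbol.nonterminal B :: β) k → (B, γ) ∈ g.rules →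
        VarT g w γ k j → VarU g w β j

  /-- Backward part of the variant: `VarT g w β j m` means suffix item [β] ∈ T_{j,m}. -/
  inductive VarT (g : CFG T N) (w : List T) : List (Symbol T N) → ℕ → ℕ → Prop where
    | empty {m} : VarU g w [] m → VarT g w [] m m
    | scan {a β j m} : VarU g w (Symbol.terminal a :: β) j → w[j]? = some a →
        VarT g w β (j + 1) m → VarT g w (Symbol.terminal a :: β) j m
    | complete {B β k γ j m} : VarU g w (Symbol.nonterminal B :: β) k → (B, γ) ∈ g.rules →
        VarT g w γ k j → VarT g w β j m → VarT g w (Symbol.nonterminal B :: β) k m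
end

/-! Soundness is an induction over the mutual definition of `U` and `T`, with the invariant
`j ≤ m ∧ β ⇒* a_{j+1}⋯a_m` for `[β] ∈ T_{j,m}`. For completeness, derivations are reorganised into
parse forests (`CFG.ForestDerives`: one tree per symbol, leaves may be unexpanded nonterminals).
Structural induction on a forest for `α ⇒* a_{i+1}⋯a_j` moves an item `[αβ] ∈ U_i` to `[β] ∈ U_j`,
filling in the `T` entries of its subtrees on the way; following the spine of a forest for
`S ⇒* a_1⋯a_i A γ` puts every right-hand side of `A` into `U_i`. -/

lemma List.append_eq_append_cons {α : Type*} {x y p q : List α} {a : α} (h : x ++ y = p ++ a :: q) :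
    (∃ r, x = p ++ a :: r ∧ q = r ++ y) ∨ (∃ r, p = x ++ r ∧ y = r ++ a :: q) := by
  rcases List.append_eq_append_iff.mp h with ⟨r, hp, hy⟩ | ⟨r, hx, hq⟩
  · exact Or.inr ⟨r, hp, hy⟩
  · rcases r with _ | ⟨b, r⟩
    · exact Or.inr ⟨[], by simpa using hx.symm, by simpa using hq.symm⟩
    · obtain ⟨rfl, rfl⟩ := List.cons.inj hq
      exact Or.inl ⟨r, hx, rfl⟩

section InputSlice

variable {w : List T} {i j k : ℕ}

@[simp]
lemma inputSlice_self (w : List T) (j : ℕ) : inputSlice (N := N) w j j = [] := by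
  simp [inputSlice]

lemma length_inputSlice (w : List T) (i j : ℕ) :
    (inputSlice (N := N) w i j).length = min j w.length - i := by
  simp [inputSlice]

lemma take_append_inputSlice (hij : i ≤ j) :
    (w.take i).map Symbol.terminal ++ inputSlice (N := N) w i j =
      (w.take j).map Symbol.terminal := by
  have htake : (w.take j).take i = w.take i := by rw [List.take_take, min_eq_left hij]
  rw [inputSlice, ← List.map_append, ← htake, List.take_append_drop]

lemma inputSlice_append_inputSlice (hik : i ≤ k) (hkj : k ≤ j) :
    inputSlice (N := N) w i k ++ inputSlice w k j = inputSlice w i j := by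
  have hdrop : w.drop k = (w.drop i).drop (k - i) := by rw [List.drop_drop]; congr 1; omega
  simp only [inputSlice, List.drop_take, ← List.map_append]
  rw [hdrop, ← List.take_add]
  congr 3
  omega

lemma inputSlice_succ {a : T} (ha : w[j]? = some a) :
    inputSlice (N := N) w j (j + 1) = [Symbol.terminal a] := by
  have hj : j < w.length := (List.getElem?_eq_some_iff.mp ha).1
  rw [inputSlice, List.take_add_one, ha, List.drop_left' (by simpa using hj.le)]
  rfl

lemma eq_of_inputSlice_eq_nil (h : inputSlice (N := N) w i j = []) (hij : i ≤ j)
    (hj : j ≤ w.length) : i = j := by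
  have := length_inputSlice (N := N) w i j
  simp [h] at this
  omega

lemma inputSlice_eq_append {u v : List (Symbol T N)} (h : inputSlice w i j = u ++ v)
    (hij : i ≤ j) : ∃ k, i ≤ k ∧ k ≤ j ∧ u = inputSlice w i k ∧ v = inputSlice w k j := by
  have hlen := congrArg List.length h
  simp only [length_inputSlice, List.length_append] at hlen
  refine ⟨i + u.length, by omega, by omega, ?_⟩
  rw [← inputSlice_append_inputSlice (k := i + u.length) (by omega) (by omega)] at h
  obtain ⟨hu, hv⟩ := List.append_inj h (by simp [length_inputSlice]; omega)
  exact ⟨hu.symm, hv.symm⟩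

lemma inputSlice_eq_cons {X : Symbol T N} {v : List (Symbol T N)}
    (h : inputSlice w i j = X :: v) (hij : i ≤ j) :
    ∃ a, X = Symbol.terminal a ∧ w[i]? = some a ∧ i + 1 ≤ j ∧ v = inputSlice w (i + 1) j := by
  have hlen := congrArg List.length h
  simp only [length_inputSlice, List.length_cons] at hlen
  have ha : w[i]? = some w[i] := List.getElem?_eq_getElem (by omega)
  rw [← inputSlice_append_inputSlice (k := i + 1) (by omega) (by omega), inputSlice_succ ha,
    List.singleton_append, List.cons.injEq] at h
  exact ⟨w[i], h.1.symm, ha, by omega, h.2.symm⟩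

end InputSlice

namespace CFG

variable {g : CFG T N}

lemma Produces.append_left {u v : List (Symbol T N)} (h : g.Produces u v) (p : List (Symbol T N)) :
    g.Produces (p ++ u) (p ++ v) := by
  obtain ⟨A, α, x, y, hr, rfl, rfl⟩ := h
  exact ⟨A, α, p ++ x, y, hr, by simp, by simp⟩

lemma Produces.append_right {u v : List (Symbol T N)} (h : g.Produces u v) (q : List (Symbol T N)) :
    g.Produces (u ++ q) (v ++ q) := by
  obtain ⟨A, α, x, y, hr, rfl, rfl⟩ := h
  exact ⟨A, α, x, y ++ q, hr, by simp, by simp⟩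

lemma Derives.append_left {u v : List (Symbol T N)} (h : g.Derives u v) (p : List (Symbol T N)) :
    g.Derives (p ++ u) (p ++ v) :=
  h.lift (p ++ ·) fun _ _ hp => hp.append_left p

lemma Derives.append_right {u v : List (Symbol T N)} (h : g.Derives u v) (q : List (Symbol T N)) :
    g.Derives (u ++ q) (v ++ q) :=
  h.lift (· ++ q) fun _ _ hp => hp.append_right q

lemma Derives.append {u u' v v' : List (Symbol T N)} (hu : g.Derives u u') (hv : g.Derives v v') :
    g.Derives (u ++ v) (u' ++ v') :=
  (hu.append_right v).trans (hv.append_left u')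

lemma Derives.of_mem_rules {A : N} {α : List (Symbol T N)} (hr : (A, α) ∈ g.rules) :
    g.Derives [Symbol.nonterminal A] α :=
  .single ⟨A, α, [], [], hr, rfl, by simp⟩

inductive ForestDerives (g : CFG T N) : List (Symbol T N) → List (Symbol T N) → Prop where
  | nil : g.ForestDerives [] []
  | leaf (X : Symbol T N) {ρ v} : g.ForestDerives ρ v → g.ForestDerives (X :: ρ) (X :: v)
  | node {B σ ρ u v} : (B, σ) ∈ g.rules → g.ForestDerives σ u → g.ForestDerives ρ v →
      g.ForestDerives (Symbol.nonterminal B :: ρ) (u ++ v)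

namespace ForestDerives

lemma refl : ∀ u : List (Symbol T N), g.ForestDerives u u
  | [] => nil
  | X :: u => leaf X (refl u)

lemma append {x y u v : List (Symbol T N)} (hx : g.ForestDerives x u) (hy : g.ForestDerives y v) :
    g.ForestDerives (x ++ y) (u ++ v) := by
  induction hx with
  | nil => exact hy
  | leaf X _ ih => exact leaf X ih
  | node hr hσ _ _ ih => rw [List.append_assoc]; exact node hr hσ ih

lemma of_append {x y v : List (Symbol T N)} (h : g.ForestDerives (x ++ y) v) :
    ∃ v₁ v₂, v = v₁ ++ v₂ ∧ g.ForestDerives x v₁ ∧ g.ForestDerives y v₂ := by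
  induction x generalizing v with
  | nil => exact ⟨[], v, rfl, nil, h⟩
  | cons X x ih =>
    cases h with
    | leaf _ h =>
      obtain ⟨v₁, v₂, rfl, h₁, h₂⟩ := ih h
      exact ⟨X :: v₁, v₂, rfl, leaf X h₁, h₂⟩
    | node hr hσ h =>
      obtain ⟨v₁, v₂, rfl, h₁, h₂⟩ := ih h
      exact ⟨_ ++ v₁, v₂, by rw [List.append_assoc], node hr hσ h₁, h₂⟩

lemma of_produces {x y v : List (Symbol T N)} (hxy : g.Produces x y) (h : g.ForestDerives y v) :
    g.ForestDerives x v := by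
  obtain ⟨A, α, p, q, hr, rfl, rfl⟩ := hxy
  obtain ⟨v₁, v₃, rfl, hpα, hq⟩ := of_append h
  obtain ⟨v₁, v₂, rfl, hp, hα⟩ := of_append hpα
  rw [List.append_assoc, List.append_assoc]
  exact hp.append (node hr hα hq)

end ForestDerives

lemma Derives.forestDerives {u v : List (Symbol T N)} (h : g.Derives u v) :
    g.ForestDerives u v := by
  induction h using Relation.ReflTransGen.head_induction_on with
  | refl => exact .refl v
  | head hp _ ih => exact .of_produces hp ih

end CFG

section Variant

def IsValidSuffixItem (g : CFG T N) (w : List T) (β : List (Symbol T N)) (j : ℕ) : Prop :=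
  ∃ i A α γ, i ≤ j ∧
    g.Derives [Symbol.nonterminal g.initial]
      ((w.take i).map Symbol.terminal ++ Symbol.nonterminal A :: γ) ∧
    (A, α ++ β) ∈ g.rules ∧
    g.Derives α (inputSlice w i j)

variable {g : CFG T N} {w : List T}

lemma IsValidSuffixItem.predict {A : N} {β γ : List (Symbol T N)} {j : ℕ}
    (h : IsValidSuffixItem g w (Symbol.nonterminal A :: β) j) (hr : (A, γ) ∈ g.rules) :
    IsValidSuffixItem g w γ j := by
  obtain ⟨i, A', α, γ', hij, hS, hr', hα⟩ := h
  refine ⟨j, A, [], β ++ γ', le_rfl, ?_, hr, by simpa using .refl⟩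
  have hexpand :
      g.Derives [Symbol.nonterminal A'] (inputSlice w i j ++ Symbol.nonterminal A :: β) :=
    (CFG.Derives.of_mem_rules hr').trans (hα.append_right _)
  have := (hexpand.append_right γ').append_left ((w.take i).map Symbol.terminal)
  rw [← take_append_inputSlice hij]
  simp only [List.append_assoc, List.cons_append] at this ⊢
  exact hS.trans this

lemma IsValidSuffixItem.scan {a : T} {β : List (Symbol T N)} {j : ℕ}
    (h : IsValidSuffixItem g w (Symbol.terminal a :: β) j) (ha : w[j]? = some a) :
    IsValidSuffixItem g w β (j + 1) := by
  obtain ⟨i, A, α, γ, hij, hS, hr, hα⟩ := h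
  refine ⟨i, A, α ++ [Symbol.terminal a], γ, by omega, hS, by simpa using hr, ?_⟩
  rw [← inputSlice_append_inputSlice hij (Nat.le_add_right j 1), inputSlice_succ ha]
  exact hα.append_right _

lemma IsValidSuffixItem.complete {B : N} {β γ : List (Symbol T N)} {k j : ℕ}
    (h : IsValidSuffixItem g w (Symbol.nonterminal B :: β) k) (hr : (B, γ) ∈ g.rules)
    (hkj : k ≤ j) (hγ : g.Derives γ (inputSlice w k j)) :
    IsValidSuffixItem g w β j := by
  obtain ⟨i, A, α, γ', hik, hS, hr', hα⟩ := h
  refine ⟨i, A, α ++ [Symbol.nonterminal B], γ', by omega, hS, by simpa using hr', ?_⟩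
  rw [← inputSlice_append_inputSlice hik hkj]
  exact hα.append ((CFG.Derives.of_mem_rules hr).trans hγ)

theorem VarU.isValidSuffixItem {β : List (Symbol T N)} {j : ℕ} (h : VarU g w β j) :
    IsValidSuffixItem g w β j :=
  VarU.rec (motive_1 := fun β j _ => IsValidSuffixItem g w β j)
    (motive_2 := fun β j m _ => j ≤ m ∧ g.Derives β (inputSlice w j m))
    (fun hr => ⟨0, g.initial, [], [], le_rfl, .refl, by simpa using hr, by simpa using .refl⟩)
    (fun _ hr ih => ih.predict hr)
    (fun _ ha ih => ih.scan ha)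
    (fun _ hr _ ihU ihT => ihU.complete hr ihT.1 ihT.2)
    (fun _ _ => ⟨le_rfl, by simpa using .refl⟩)
    (fun _ ha _ _ ih => ⟨by omega, by
      rw [← inputSlice_append_inputSlice (Nat.le_add_right _ 1) ih.1, inputSlice_succ ha]
      exact ih.2.append_left [Symbol.terminal _]⟩)
    (fun _ hr _ _ _ ihγ ihβ => ⟨ihγ.1.trans ihβ.1, by
      rw [← inputSlice_append_inputSlice ihγ.1 ihβ.1]
      exact ((CFG.Derives.of_mem_rules hr).append_right _).trans (ihγ.2.append ihβ.2)⟩)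
    h

theorem VarU.advance {α β : List (Symbol T N)} {i j : ℕ}
    (hα : g.ForestDerives α (inputSlice w i j)) (hU : VarU g w (α ++ β) i) (hij : i ≤ j)
    (hj : j ≤ w.length) :
    VarU g w β j ∧ ∀ m, VarT g w β j m → VarT g w (α ++ β) i m := by
  generalize hv : inputSlice w i j = v at hα
  induction hα generalizing β i j with
  | nil =>
    obtain rfl := eq_of_inputSlice_eq_nil hv hij hj
    exact ⟨hU, fun _ h => h⟩
  | leaf X _ ih =>
    obtain ⟨a, rfl, ha, hij', hv'⟩ := inputSlice_eq_cons hv hij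
    obtain ⟨hβ, hT⟩ := ih (VarU.scan hU ha) hij' hj hv'.symm
    exact ⟨hβ, fun m h => VarT.scan hU ha (hT m h)⟩
  | @node B σ ρ u v hr _ _ ihσ ihρ =>
    obtain ⟨k, hik, hkj, hu, hv'⟩ := inputSlice_eq_append hv hij
    obtain ⟨hnil, hTσ⟩ :=
      ihσ (β := []) (by simpa using VarU.predict hU hr) hik (hkj.trans hj) hu.symm
    have hσ : VarT g w σ i k := by simpa using hTσ k (VarT.empty hnil)
    obtain ⟨hβ, hT⟩ := ihρ (VarU.complete hU hr hσ) hkj hj hv'.symm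
    exact ⟨hβ, fun m h => VarT.complete hU hr hσ (hT m h)⟩

theorem VarT.of_forestDerives {β : List (Symbol T N)} {j m : ℕ}
    (hβ : g.ForestDerives β (inputSlice w j m)) (hU : VarU g w β j) (hjm : j ≤ m)
    (hm : m ≤ w.length) : VarT g w β j m := by
  obtain ⟨hnil, hT⟩ := VarU.advance (β := []) hβ (by simpa using hU) hjm hm
  simpa using hT m (VarT.empty hnil)

theorem VarU.predict_of_forestDerives {ρ θ σ γ : List (Symbol T N)} {A : N} {i k : ℕ}
    (hρ : g.ForestDerives ρ (inputSlice w i k ++ Symbol.nonterminal A :: γ))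
    (hU : VarU g w (ρ ++ θ) i) (hA : (A, σ) ∈ g.rules) (hik : i ≤ k) (hk : k ≤ w.length) :
    VarU g w σ k := by
  generalize hv : inputSlice w i k ++ Symbol.nonterminal A :: γ = v at hρ
  induction hρ generalizing θ i γ with
  | nil => simp at hv
  | leaf X _ ih =>
    rcases List.append_eq_cons_iff.mp hv with ⟨hnil, hX⟩ | ⟨s, hs, hv'⟩
    · obtain rfl := eq_of_inputSlice_eq_nil hnil hik hk
      obtain ⟨rfl, -⟩ := List.cons.inj hX
      exact VarU.predict hU hA
    · obtain ⟨a, rfl, ha, hik', rfl⟩ := inputSlice_eq_cons hs hik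
      exact ih (VarU.scan hU ha) hik' hv'.symm
  | @node B τ ρ u v hr hτ _ ihτ ihρ =>
    rcases List.append_eq_append_cons hv.symm with ⟨r, hu, -⟩ | ⟨r, hs, hv'⟩
    · exact ihτ (θ := []) (by simpa using VarU.predict hU hr) hik hu.symm
    · obtain ⟨k', hik', hk'k, rfl, rfl⟩ := inputSlice_eq_append hs hik
      have hτ' := VarT.of_forestDerives hτ (VarU.predict hU hr) hik' (hk'k.trans hk)
      exact ihρ (VarU.complete hU hr hτ') hk'k hv'.symm

theorem VarU.predict_of_derives_initial {A : N} {γ σ : List (Symbol T N)} {i : ℕ}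
    (hS : g.Derives [Symbol.nonterminal g.initial]
      ((w.take i).map Symbol.terminal ++ Symbol.nonterminal A :: γ))
    (hA : (A, σ) ∈ g.rules) (hi : i ≤ w.length) : VarU g w σ i := by
  have htake : (w.take i).map Symbol.terminal = inputSlice (N := N) w 0 i := by simp [inputSlice]
  have hforest := hS.forestDerives
  rw [htake] at hforest
  generalize hv : inputSlice w 0 i ++ Symbol.nonterminal A :: γ = v at hforest
  rcases hforest with _ | ⟨_, hnil⟩ | ⟨hr, hτ, hnil⟩ <;> cases hnil
  · obtain ⟨hslice, ⟨⟩⟩ | ⟨-, ⟨⟩⟩ := List.append_eq_singleton_iff.mp hv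
    obtain rfl := eq_of_inputSlice_eq_nil hslice (Nat.zero_le i) hi
    exact VarU.init hA
  · rw [List.append_nil] at hv
    exact VarU.predict_of_forestDerives (θ := []) (hv ▸ hτ) (by simpa using VarU.init hr) hA
      (Nat.zero_le i) hi

end Variant

/-- [β] ∈ U_j iff there are i, A, α, γ with S ⇒* a_1⋯a_i A γ,
(A → αβ) ∈ P and α ⇒* a_{i+1}⋯a_j. -/
theorem variant_U_characterization (g : CFG T N) (w : List T)
    (β : List (Symbol T N)) (j : ℕ) (hj : j ≤ w.length) :
    VarU g w β j ↔
      ∃ i A α γ, i ≤ j ∧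
        g.Derives [Symbol.nonterminal g.initial]
          ((w.take i).map Symbol.terminal ++ Symbol.nonterminal A :: γ) ∧
        (A, α ++ β) ∈ g.rules ∧
        g.Derives α (inputSlice w i j) := by
  refine ⟨VarU.isValidSuffixItem, ?_⟩
  rintro ⟨i, A, α, γ, hij, hS, hA, hα⟩
  have hαβ := VarU.predict_of_derives_initial hS hA (hij.trans hj)
  exact (VarU.advance hα.forestDerives hαβ hij hj).1
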